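/- Let c ≠ 0 and g(x) = c·x. Suppose T : ℝ² → ℝ is a function such that for all x, y ∈ ℝ, c(x+y) = cx·cy − c(x+T(x,y))·c(y+T(x,y)). Then for each x, y, T(x,y) satisfies the quadratic equation T² + (x+y)T + (x+y)/c = 0; in particular T(x,y) = −(x+y)/2 ± (1/2)·√((x+y)((x+y) − 4/c)) whenever (x+y)((x+y) − 4/c) ≥ 0. -/
import Mathlib


theorem additive_cauchy_pair_cosine (c : ℝ) (hc : c ≠ 0) (T : ℝ → ℝ → ℝ)
    (hT : ∀ x y : ℝ,
      c * (x + y) = (c * x) * (c * y) - (c * (x + T x y)) * (c * (y + T x y))) :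
    ∀ x y : ℝ,
      (T x y) ^ 2 + (x + y) * T x y + (x + y) / c = 0 ∧
      ((x + y) * ((x + y) - 4 / c) ≥ 0 →
        T x y = -(x + y) / 2 + Real.sqrt ((x + y) * ((x + y) - 4 / c)) / 2 ∨
        T x y = -(x + y) / 2 - Real.sqrt ((x + y) * ((x + y) - 4 / c)) / 2) := by
  intro x y
  have h := hT x y
  have hquad : (T x y) ^ 2 + (x + y) * T x y + (x + y) / c = 0 := by
    field_simp
    apply mul_left_cancel₀ hc
    linear_combination h
  refine ⟨hquad, fun hD => ?_⟩
  set s := x + y with hs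
  have hsq : Real.sqrt (s * (s - 4 / c)) ^ 2 = s * (s - 4 / c) := Real.sq_sqrt hD
  have key : (T x y + s / 2) ^ 2 = (Real.sqrt (s * (s - 4 / c)) / 2) ^ 2 := by
    linear_combination hquad - hsq / 4
  rcases sq_eq_sq_iff_eq_or_eq_neg.mp key with h1 | h1
  · left; linarith
  · right; linarith
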